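/- Let d ≥ 1, let D = d(d+3)/2, and let X = {x_1,…,x_N} be a finite subset of the unit sphere S^d ⊂ ℝ^{d+1} satisfying (1/N^2) · Σ_{i,j} ⟨x_i,x_j⟩^2 = 1/(d+1) and (1/N^2) · Σ_{i,j} ⟨x_i,x_j⟩^4 = 3/((d+3)(d+1)). Suppose φ : {1,…,N} → S^{D−1} ⊂ ℝ^D is a map such that ⟨φ(i), φ(j)⟩ = g_{2,d}(⟨x_i,x_j⟩) for all i,j, where g_{2,d}(s) = ((d+1)/d)·s^2 − 1/d, that φ is injective, and that φ(i) ≠ −φ(j) for all i,j. Then the antipodal set Y = φ({1,…,N}) ∪ (−φ({1,…,N})), which has cardinality 2N, is a spherical 3-design in S^{D−1}. -/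

import Mathlib

open MeasureTheory Metric Finset
open scoped RealInnerProductSpace

attribute [local instance] Classical.propDecidable

/-- The uniform (normalized) surface probability measure on the unit sphere
`S^{n-1} ⊆ ℝ^n`. -/
noncomputable def uniformSphereMeasure (n : ℕ) :
    Measure (sphere (0 : EuclideanSpace ℝ (Fin n)) 1) :=
  ((volume : Measure (EuclideanSpace ℝ (Fin n))).toSphere Set.univ)⁻¹ •
    (volume : Measure (EuclideanSpace ℝ (Fin n))).toSphere

/-- A finite set `X` in the unit sphere `S^{n-1} ⊆ ℝ^n` is a spherical `t`-design
if the average over `X` of every polynomial of total degree at most `t` equals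
its mean value over the sphere with respect to the uniform surface measure. -/
def IsSphericalDesign (n t : ℕ)
    (X : Finset (sphere (0 : EuclideanSpace ℝ (Fin n)) 1)) : Prop :=
  ∀ f : MvPolynomial (Fin n) ℝ, f.totalDegree ≤ t →
    (∑ x ∈ X, MvPolynomial.eval (x : EuclideanSpace ℝ (Fin n)) f) / (X.card : ℝ) =
      ∫ x, MvPolynomial.eval (x : EuclideanSpace ℝ (Fin n)) f ∂(uniformSphereMeasure n)


noncomputable section SphereDesignAux

open scoped Pointwise

variable {n : ℕ}

/-- The map on the unit sphere induced by a linear isometry equivalence. -/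
def sphMap (e : EuclideanSpace ℝ (Fin n) ≃ₗᵢ[ℝ] EuclideanSpace ℝ (Fin n)) :
    sphere (0 : EuclideanSpace ℝ (Fin n)) 1 → sphere (0 : EuclideanSpace ℝ (Fin n)) 1 :=
  fun y => ⟨e y, by
    rw [mem_sphere_zero_iff_norm, e.norm_map]
    exact norm_eq_of_mem_sphere y⟩

theorem continuous_sphMap (e : EuclideanSpace ℝ (Fin n) ≃ₗᵢ[ℝ] EuclideanSpace ℝ (Fin n)) :
    Continuous (sphMap e) :=
  (e.continuous.comp continuous_subtype_val).subtype_mk _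

@[simp] theorem sphMap_coe (e : EuclideanSpace ℝ (Fin n) ≃ₗᵢ[ℝ] EuclideanSpace ℝ (Fin n))
    (y : sphere (0 : EuclideanSpace ℝ (Fin n)) 1) :
    ((sphMap e y : _) : EuclideanSpace ℝ (Fin n)) = e y := rfl

theorem map_sphMap_toSphere (e : EuclideanSpace ℝ (Fin n) ≃ₗᵢ[ℝ] EuclideanSpace ℝ (Fin n)) :
    Measure.map (sphMap e) (volume : Measure (EuclideanSpace ℝ (Fin n))).toSphere
      = (volume : Measure (EuclideanSpace ℝ (Fin n))).toSphere := by
  refine Measure.ext fun s hs => ?_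
  rw [Measure.map_apply (continuous_sphMap e).measurable hs,
      Measure.toSphere_apply' _ ((continuous_sphMap e).measurable hs),
      Measure.toSphere_apply' _ hs]
  congr 1
  have h1 : (Subtype.val '' (sphMap e ⁻¹' s)) = ⇑e ⁻¹' (Subtype.val '' s) := by
    ext z
    constructor
    · rintro ⟨y, hy, rfl⟩
      exact ⟨sphMap e y, hy, rfl⟩
    · rintro ⟨w, hw, hwz⟩
      have hz : z ∈ sphere (0 : EuclideanSpace ℝ (Fin n)) 1 := by
        rw [mem_sphere_zero_iff_norm, ← e.norm_map, ← hwz]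
        exact norm_eq_of_mem_sphere w
      refine ⟨⟨z, hz⟩, ?_, rfl⟩
      show sphMap e ⟨z, hz⟩ ∈ s
      have : sphMap e ⟨z, hz⟩ = w := Subtype.ext hwz.symm
      rw [this]; exact hw
  rw [h1]
  have h2 : Set.Ioo (0:ℝ) 1 • (⇑e ⁻¹' (Subtype.val '' s))
      = ⇑e ⁻¹' (Set.Ioo (0:ℝ) 1 • (Subtype.val '' s)) := by
    ext z
    constructor
    · rintro ⟨c, hc, y, hy, rfl⟩
      refine Set.mem_preimage.2 ⟨c, hc, e y, hy, ?_⟩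
      rw [e.map_smul]
    · rintro ⟨c, hc, a, ha, hca⟩
      refine ⟨c, hc, e.symm a, by simpa using ha, ?_⟩
      apply e.injective
      rw [e.map_smul, e.apply_symm_apply]
      exact hca
  rw [h2]
  exact (show MeasurePreserving e.toHomeomorph.toMeasurableEquiv volume volume from
    e.measurePreserving).measure_preimage_equiv _

theorem map_sphMap_uniform (e : EuclideanSpace ℝ (Fin n) ≃ₗᵢ[ℝ] EuclideanSpace ℝ (Fin n)) :
    Measure.map (sphMap e) (uniformSphereMeasure n) = uniformSphereMeasure n := by
  rw [uniformSphereMeasure, Measure.map_smul, map_sphMap_toSphere]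

theorem integral_sphMap (e : EuclideanSpace ℝ (Fin n) ≃ₗᵢ[ℝ] EuclideanSpace ℝ (Fin n))
    (g : sphere (0 : EuclideanSpace ℝ (Fin n)) 1 → ℝ) (hg : Continuous g) :
    ∫ y, g (sphMap e y) ∂(uniformSphereMeasure n) = ∫ y, g y ∂(uniformSphereMeasure n) := by
  conv_rhs => rw [← map_sphMap_uniform e]
  rw [integral_map (continuous_sphMap e).measurable.aemeasurable hg.aestronglyMeasurable]

theorem integral_eq_zero_of_negation (e : EuclideanSpace ℝ (Fin n) ≃ₗᵢ[ℝ] EuclideanSpace ℝ (Fin n))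
    (g : sphere (0 : EuclideanSpace ℝ (Fin n)) 1 → ℝ) (hg : Continuous g)
    (h : ∀ y, g (sphMap e y) = - g y) :
    ∫ y, g y ∂(uniformSphereMeasure n) = 0 := by
  have h1 := integral_sphMap e g hg
  simp only [h, integral_neg] at h1
  linarith

theorem toSphere_univ_ne_zero (hn : 0 < n) :
    (volume : Measure (EuclideanSpace ℝ (Fin n))).toSphere Set.univ ≠ 0 := by
  rw [Measure.toSphere_apply_univ]
  refine mul_ne_zero ?_ (measure_ball_pos _ _ one_pos).ne'
  simp [finrank_euclideanSpace_fin, hn.ne']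

theorem toSphere_univ_ne_top :
    (volume : Measure (EuclideanSpace ℝ (Fin n))).toSphere Set.univ ≠ ⊤ :=
  (measure_lt_top _ _).ne

theorem isProbability_uniform (hn : 0 < n) :
    IsProbabilityMeasure (uniformSphereMeasure n) := by
  constructor
  rw [uniformSphereMeasure, Measure.smul_apply, smul_eq_mul,
    ENNReal.inv_mul_cancel (toSphere_univ_ne_zero hn) toSphere_univ_ne_top]

theorem integrable_of_continuous (hn : 0 < n)
    (g : sphere (0 : EuclideanSpace ℝ (Fin n)) 1 → ℝ) (hg : Continuous g) :
    Integrable g (uniformSphereMeasure n) := by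
  haveI := isProbability_uniform hn
  obtain ⟨C, hC⟩ := (isCompact_univ
    (X := sphere (0 : EuclideanSpace ℝ (Fin n)) 1)).exists_bound_of_continuousOn hg.continuousOn
  exact (integrable_const C).mono' hg.aestronglyMeasurable (ae_of_all _ fun y => hC y trivial)

def flipE (n : ℕ) (k : Fin n) :
    EuclideanSpace ℝ (Fin n) ≃ₗᵢ[ℝ] EuclideanSpace ℝ (Fin n) :=
  LinearIsometryEquiv.piLpCongrRight 2
    (fun i => if i = k then LinearIsometryEquiv.neg ℝ else LinearIsometryEquiv.refl ℝ ℝ)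

theorem flipE_apply (k i : Fin n) (y : EuclideanSpace ℝ (Fin n)) :
    flipE n k y i = if i = k then -(y i) else y i := by
  rw [flipE, LinearIsometryEquiv.piLpCongrRight_apply]
  rcases eq_or_ne i k with rfl | h
  · simp
  · simp [h]

def swapE (n : ℕ) (k l : Fin n) :
    EuclideanSpace ℝ (Fin n) ≃ₗᵢ[ℝ] EuclideanSpace ℝ (Fin n) :=
  LinearIsometryEquiv.piLpCongrLeft 2 ℝ ℝ (Equiv.swap k l)

theorem swapE_apply (k l i : Fin n) (y : EuclideanSpace ℝ (Fin n)) :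
    swapE n k l y i = y (Equiv.swap k l i) := by
  rw [swapE, LinearIsometryEquiv.piLpCongrLeft_apply]
  simp [Equiv.piCongrLeft'_apply]

theorem continuous_coord (k : Fin n) :
    Continuous (fun y : sphere (0 : EuclideanSpace ℝ (Fin n)) 1 =>
      (y : EuclideanSpace ℝ (Fin n)) k) :=
  (EuclideanSpace.proj k).continuous.comp continuous_subtype_val

theorem sum_sq_coord (y : sphere (0 : EuclideanSpace ℝ (Fin n)) 1) :
    ∑ i, ((y : EuclideanSpace ℝ (Fin n)) i) ^ 2 = 1 := by
  have h := norm_eq_of_mem_sphere y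
  rw [EuclideanSpace.norm_eq] at h
  rw [Real.sqrt_eq_one] at h
  simpa [Real.norm_eq_abs, sq_abs] using h

theorem integral_coord_mul (hn : 0 < n) (k l : Fin n) :
    ∫ y, ((y : EuclideanSpace ℝ (Fin n)) k * (y : EuclideanSpace ℝ (Fin n)) l)
        ∂(uniformSphereMeasure n)
      = (if k = l then (1:ℝ) else 0) / n := by
  haveI := isProbability_uniform hn
  rcases eq_or_ne k l with rfl | hkl
  · rw [if_pos rfl]
    have hIq : ∀ m : Fin n,
        (∫ y, ((y : EuclideanSpace ℝ (Fin n)) m * (y : EuclideanSpace ℝ (Fin n)) m)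
          ∂(uniformSphereMeasure n))
        = ∫ y, ((y : EuclideanSpace ℝ (Fin n)) ⟨0, hn⟩ * (y : EuclideanSpace ℝ (Fin n)) ⟨0, hn⟩)
          ∂(uniformSphereMeasure n) := by
      intro m
      have := integral_sphMap (n := n) (swapE n m ⟨0, hn⟩)
        (fun y => (y : EuclideanSpace ℝ (Fin n)) m * (y : EuclideanSpace ℝ (Fin n)) m)
        ((continuous_coord m).mul (continuous_coord m))
      rw [← this]
      congr 1
      funext y
      simp only [sphMap_coe, swapE_apply]
      rw [Equiv.swap_apply_left]
    have hsum : ∑ m : Fin n,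
        (∫ y, ((y : EuclideanSpace ℝ (Fin n)) m * (y : EuclideanSpace ℝ (Fin n)) m)
          ∂(uniformSphereMeasure n)) = 1 := by
      rw [← integral_finset_sum _ (fun m _ => integrable_of_continuous hn
        (fun y => (y : EuclideanSpace ℝ (Fin n)) m * (y : EuclideanSpace ℝ (Fin n)) m)
        ((continuous_coord m).mul (continuous_coord m)))]
      have : ∀ y : sphere (0 : EuclideanSpace ℝ (Fin n)) 1,
          ∑ m : Fin n, ((y : EuclideanSpace ℝ (Fin n)) m * (y : EuclideanSpace ℝ (Fin n)) m)
            = 1 := by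
        intro y
        simpa [sq] using sum_sq_coord y
      simp only [this]
      simp
    rw [hIq k]
    have hn' : (n : ℝ) ≠ 0 := Nat.cast_ne_zero.mpr hn.ne'
    rw [Finset.sum_congr rfl (fun m _ => hIq m), Finset.sum_const, card_univ,
      Fintype.card_fin, nsmul_eq_mul] at hsum
    field_simp
    simp only [sq]
    linarith
  · rw [if_neg hkl]
    rw [zero_div]
    apply integral_eq_zero_of_negation (flipE n k)
    · exact (continuous_coord k).mul (continuous_coord l)
    · intro y
      have h1 : (flipE n k ((y : EuclideanSpace ℝ (Fin n)))) k
          = -((y : EuclideanSpace ℝ (Fin n)) k) := by rw [flipE_apply]; simp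
      have h2 : (flipE n k ((y : EuclideanSpace ℝ (Fin n)))) l
          = (y : EuclideanSpace ℝ (Fin n)) l := by
        rw [flipE_apply, if_neg (Ne.symm hkl)]
      simp only [sphMap_coe, h1, h2]
      ring

theorem integral_odd_monomial (α : Fin n →₀ ℕ) (hodd : Odd (∑ i, α i)) :
    ∫ y, (∏ i, ((y : EuclideanSpace ℝ (Fin n)) i) ^ α i) ∂(uniformSphereMeasure n) = 0 := by
  apply integral_eq_zero_of_negation (LinearIsometryEquiv.neg ℝ)
  · exact continuous_finset_prod _ fun i _ => (continuous_coord i).pow _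
  · intro y
    have hco : ∀ i, ((sphMap (LinearIsometryEquiv.neg ℝ) y : EuclideanSpace ℝ (Fin n))) i
        = -((y : EuclideanSpace ℝ (Fin n)) i) := fun i => rfl
    calc ∏ i, ((sphMap (LinearIsometryEquiv.neg ℝ) y : EuclideanSpace ℝ (Fin n)) i) ^ α i
        = ∏ i, (-((y : EuclideanSpace ℝ (Fin n)) i)) ^ α i :=
          Finset.prod_congr rfl fun i _ => by rw [hco]
      _ = ∏ i, ((-1 : ℝ) ^ (α i) * ((y : EuclideanSpace ℝ (Fin n)) i) ^ α i) :=
          Finset.prod_congr rfl fun i _ => by rw [neg_pow]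
      _ = ((-1 : ℝ) ^ (∑ i, α i)) * ∏ i, ((y : EuclideanSpace ℝ (Fin n)) i) ^ α i := by
          rw [Finset.prod_mul_distrib, Finset.prod_pow_eq_pow_sum]
      _ = - ∏ i, ((y : EuclideanSpace ℝ (Fin n)) i) ^ α i := by
          rw [Odd.neg_one_pow hodd]; ring

end SphereDesignAux

section SphereDesignAux2

open scoped RealInnerProductSpace

theorem sum_eq_two_pair {D : ℕ} (α : Fin D →₀ ℕ) (h : ∑ i, α i = 2) :
    ∃ k l : Fin D, ∀ y : EuclideanSpace ℝ (Fin D), (∏ i, y i ^ α i) = y k * y l := by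
  have hex : ∃ k, α k ≠ 0 := by
    by_contra h'
    push_neg at h'
    simp [h'] at h
  obtain ⟨k, hk⟩ := hex
  have hsplit : α k + ∑ i ∈ Finset.univ.erase k, α i = 2 := by
    rw [Finset.add_sum_erase _ _ (Finset.mem_univ k)]
    exact h
  rcases Nat.lt_or_ge (α k) 2 with h1 | h2
  · have hk1 : α k = 1 := by omega
    have hrest : ∑ i ∈ Finset.univ.erase k, α i = 1 := by omega
    have hex2 : ∃ l ∈ Finset.univ.erase k, α l ≠ 0 := by
      by_contra h'
      push_neg at h'
      rw [Finset.sum_eq_zero h'] at hrest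
      omega
    obtain ⟨l, hl, hl0⟩ := hex2
    have hsplit2 : α l + ∑ i ∈ (Finset.univ.erase k).erase l, α i = 1 := by
      rw [Finset.add_sum_erase _ _ hl]
      exact hrest
    have hl1 : α l = 1 := by omega
    have hzero : ∀ i ∈ (Finset.univ.erase k).erase l, α i = 0 := by
      intro i hi
      have h5 : α i ≤ ∑ j ∈ (Finset.univ.erase k).erase l, α j :=
        Finset.single_le_sum (fun j _ => Nat.zero_le _) hi
      omega
    refine ⟨k, l, fun y => ?_⟩
    rw [← Finset.mul_prod_erase _ _ (Finset.mem_univ k), ← Finset.mul_prod_erase _ _ hl,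
      Finset.prod_eq_one (fun i hi => by rw [hzero i hi, pow_zero]), hk1, hl1]
    ring
  · have hk2 : α k = 2 := by
      have h5 : α k ≤ ∑ j ∈ Finset.univ, α j :=
        Finset.single_le_sum (fun j _ => Nat.zero_le _) (Finset.mem_univ k)
      omega
    have hzero : ∀ i ∈ Finset.univ.erase k, α i = 0 := by
      intro i hi
      have h5 : α i ≤ ∑ j ∈ Finset.univ.erase k, α j :=
        Finset.single_le_sum (fun j _ => Nat.zero_le _) hi
      omega
    refine ⟨k, k, fun y => ?_⟩
    rw [← Finset.mul_prod_erase _ _ (Finset.mem_univ k),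
      Finset.prod_eq_one (fun i hi => by rw [hzero i hi, pow_zero]), hk2]
    ring

theorem frame_cond {N D : ℕ} (hD0 : 0 < D)
    (φ : Fin N → sphere (0 : EuclideanSpace ℝ (Fin D)) 1)
    (hT : ∑ i, ∑ j, (⟪(φ i : EuclideanSpace ℝ (Fin D)), (φ j : EuclideanSpace ℝ (Fin D))⟫) ^ 2
      = (N : ℝ) ^ 2 / D) (k l : Fin D) :
    ∑ i, (φ i : EuclideanSpace ℝ (Fin D)) k * (φ i : EuclideanSpace ℝ (Fin D)) l
      = ((N : ℝ) / D) * (if k = l then 1 else 0) := by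
  set a : Fin N → Fin D → ℝ := fun i k => (φ i : EuclideanSpace ℝ (Fin D)) k with ha
  set M : Fin D → Fin D → ℝ := fun k l => ∑ i, a i k * a i l with hM
  set c : ℝ := (N : ℝ) / D with hc
  have hDr : (D : ℝ) ≠ 0 := Nat.cast_ne_zero.mpr hD0.ne'
  have hinner : ∀ i j, ⟪(φ i : EuclideanSpace ℝ (Fin D)), (φ j : EuclideanSpace ℝ (Fin D))⟫
      = ∑ m, a i m * a j m := by
    intro i j
    simp [PiLp.inner_apply, RCLike.inner_apply, conj_trivial, ha]
    exact Finset.sum_congr rfl fun _ _ => mul_comm _ _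
  have htrace : ∑ m, M m m = (N : ℝ) := by
    calc ∑ m, M m m = ∑ m, ∑ i, a i m * a i m := rfl
      _ = ∑ i, ∑ m : Fin D, a i m * a i m := Finset.sum_comm
      _ = ∑ i : Fin N, (1 : ℝ) := by
          refine Finset.sum_congr rfl fun i _ => ?_
          simpa [sq] using sum_sq_coord (φ i)
      _ = (N : ℝ) := by simp
  have hfrob : ∑ k, ∑ l, M k l * M k l = (N : ℝ) ^ 2 / D := by
    calc ∑ k, ∑ l, M k l * M k l
        = ∑ k, ∑ l, ∑ i, ∑ j, (a i k * a i l) * (a j k * a j l) := by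
          refine Finset.sum_congr rfl fun k _ => Finset.sum_congr rfl fun l _ => ?_
          rw [Finset.sum_mul_sum]
      _ = ∑ k, ∑ i, ∑ l, ∑ j, (a i k * a i l) * (a j k * a j l) :=
          Finset.sum_congr rfl fun k _ => Finset.sum_comm
      _ = ∑ i, ∑ k, ∑ l, ∑ j, (a i k * a i l) * (a j k * a j l) := Finset.sum_comm
      _ = ∑ i, ∑ k, ∑ j, ∑ l, (a i k * a i l) * (a j k * a j l) :=
          Finset.sum_congr rfl fun i _ => Finset.sum_congr rfl fun k _ => Finset.sum_comm
      _ = ∑ i, ∑ j, ∑ k, ∑ l, (a i k * a i l) * (a j k * a j l) :=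
          Finset.sum_congr rfl fun i _ => Finset.sum_comm
      _ = ∑ i, ∑ j, (∑ k, a i k * a j k) * (∑ l, a i l * a j l) := by
          refine Finset.sum_congr rfl fun i _ => Finset.sum_congr rfl fun j _ => ?_
          rw [Finset.sum_mul_sum]
          exact Finset.sum_congr rfl fun k _ => Finset.sum_congr rfl fun l _ => by ring
      _ = ∑ i, ∑ j,
            (⟪(φ i : EuclideanSpace ℝ (Fin D)), (φ j : EuclideanSpace ℝ (Fin D))⟫) ^ 2 := by
          refine Finset.sum_congr rfl fun i _ => Finset.sum_congr rfl fun j _ => ?_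
          rw [hinner i j, sq]
      _ = (N : ℝ) ^ 2 / D := hT
  have hzero : ∑ k, ∑ l, (M k l - c * (if k = l then 1 else 0)) ^ 2 = 0 := by
    have hexp : ∀ k : Fin D, ∑ l, (M k l - c * (if k = l then 1 else 0)) ^ 2
        = ∑ l, M k l * M k l - 2 * c * M k k + c ^ 2 := by
      intro k
      have : ∀ l : Fin D, (M k l - c * (if k = l then 1 else 0)) ^ 2
          = M k l * M k l - 2 * c * (if k = l then M k l else 0)
            + c ^ 2 * (if k = l then 1 else 0) := by
        intro l
        rcases eq_or_ne k l with rfl | h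
        · simp; ring
        · simp [h, sq]
      rw [Finset.sum_congr rfl fun l _ => this l]
      rw [Finset.sum_add_distrib, Finset.sum_sub_distrib, ← Finset.mul_sum, ← Finset.mul_sum,
        Finset.sum_ite_eq, Finset.sum_ite_eq, if_pos (Finset.mem_univ k),
        if_pos (Finset.mem_univ k)]
      ring
    rw [Finset.sum_congr rfl fun k _ => hexp k, Finset.sum_add_distrib, Finset.sum_sub_distrib,
      hfrob, ← Finset.mul_sum, htrace, Finset.sum_const, Finset.card_univ, Fintype.card_fin,
      nsmul_eq_mul, hc]
    field_simp
    ring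
  have h1 : ∀ k' ∈ Finset.univ, ∑ l, (M k' l - c * (if k' = l then 1 else 0)) ^ 2 = 0 :=
    (Finset.sum_eq_zero_iff_of_nonneg
      (fun k' _ => Finset.sum_nonneg fun l _ => sq_nonneg _)).mp hzero
  have h2 : ∀ l' ∈ Finset.univ, (M k l' - c * (if k = l' then 1 else 0)) ^ 2 = 0 :=
    (Finset.sum_eq_zero_iff_of_nonneg (fun l _ => sq_nonneg _)).mp (h1 k (Finset.mem_univ k))
  have h3 := h2 l (Finset.mem_univ l)
  exact sub_eq_zero.mp (sq_eq_zero_iff.mp h3)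

end SphereDesignAux2

/-- If `x_1, …, x_N ∈ S^d` satisfy the second and fourth moment conditions and
`φ : {1,…,N} → S^{D-1}` (with `D = d(d+3)/2`) is an injective map with
`⟨φ(i),φ(j)⟩ = g_{2,d}(⟨x_i,x_j⟩)` and `φ(i) ≠ -φ(j)` for all `i,j`, then
`φ({1,…,N}) ∪ (-φ({1,…,N}))` is an antipodal spherical `3`-design of
cardinality `2N` in `S^{D-1}`. -/
theorem image_is_three_design (d N D : ℕ) (hd : 1 ≤ d) (hD : 2 * D = d * (d + 3))
    (x : Fin N → sphere (0 : EuclideanSpace ℝ (Fin (d+1))) 1)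
    (hxinj : Function.Injective x)
    (h2 : (∑ i, ∑ j,
        ⟪(x i : EuclideanSpace ℝ (Fin (d+1))), (x j : EuclideanSpace ℝ (Fin (d+1)))⟫ ^ 2)
      / (N : ℝ) ^ 2 = 1 / (d + 1))
    (h4 : (∑ i, ∑ j,
        ⟪(x i : EuclideanSpace ℝ (Fin (d+1))), (x j : EuclideanSpace ℝ (Fin (d+1)))⟫ ^ 4)
      / (N : ℝ) ^ 2 = 3 / ((d + 3) * (d + 1)))
    (φ : Fin N → sphere (0 : EuclideanSpace ℝ (Fin D)) 1)
    (hφ : ∀ i j, ⟪(φ i : EuclideanSpace ℝ (Fin D)), (φ j : EuclideanSpace ℝ (Fin D))⟫ =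
      ((d + 1) / d) *
        ⟪(x i : EuclideanSpace ℝ (Fin (d+1))), (x j : EuclideanSpace ℝ (Fin (d+1)))⟫ ^ 2
        - 1 / d)
    (hφinj : Function.Injective φ) (hφneg : ∀ i j, φ i ≠ -φ j) :
    (Finset.univ.image φ ∪ Finset.univ.image fun i => -φ i).card = 2 * N ∧
    IsSphericalDesign D 3 (Finset.univ.image φ ∪ Finset.univ.image fun i => -φ i) := by
  classical
  have hN : N ≠ 0 := by
    intro h0
    subst h0
    have hz : ((0:ℝ)) = 1 / ((d:ℝ) + 1) := by simpa using h2
    have hdpos : (0:ℝ) < 1 / ((d:ℝ) + 1) := by positivity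
    linarith
  have hD0 : 0 < D := by nlinarith [hd, hD]
  have hNr : (N:ℝ) ≠ 0 := Nat.cast_ne_zero.mpr hN
  have hdr1 : (1:ℝ) ≤ (d:ℝ) := by exact_mod_cast hd
  have hdr : (d:ℝ) ≠ 0 := by linarith
  have hDr : (D:ℝ) ≠ 0 := Nat.cast_ne_zero.mpr hD0.ne'
  have h2D : (2:ℝ) * D = (d:ℝ) * ((d:ℝ)+3) := by exact_mod_cast hD
  have hS2 : (∑ i, ∑ j,
        ⟪(x i : EuclideanSpace ℝ (Fin (d+1))), (x j : EuclideanSpace ℝ (Fin (d+1)))⟫ ^ 2)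
      = (N:ℝ)^2 / ((d:ℝ)+1) := by
    rw [div_eq_div_iff (by positivity) (by positivity : ((d:ℝ)+1) ≠ 0)] at h2
    rw [eq_div_iff (by positivity : ((d:ℝ)+1) ≠ 0)]
    linarith
  have hS4 : (∑ i, ∑ j,
        ⟪(x i : EuclideanSpace ℝ (Fin (d+1))), (x j : EuclideanSpace ℝ (Fin (d+1)))⟫ ^ 4)
      = 3 * (N:ℝ)^2 / (((d:ℝ)+3) * ((d:ℝ)+1)) := by
    rw [div_eq_div_iff (by positivity) (by positivity : (((d:ℝ)+3)*((d:ℝ)+1)) ≠ 0)] at h4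
    rw [eq_div_iff (by positivity : (((d:ℝ)+3)*((d:ℝ)+1)) ≠ 0)]
    linarith
  have hT : (∑ i, ∑ j,
      ⟪(φ i : EuclideanSpace ℝ (Fin D)), (φ j : EuclideanSpace ℝ (Fin D))⟫ ^ 2)
      = (N : ℝ) ^ 2 / D := by
    calc (∑ i, ∑ j,
        ⟪(φ i : EuclideanSpace ℝ (Fin D)), (φ j : EuclideanSpace ℝ (Fin D))⟫ ^ 2)
        = ∑ i, ∑ j, ((((d:ℝ)+1)/d)^2 *
            ⟪(x i : EuclideanSpace ℝ (Fin (d+1))), (x j : EuclideanSpace ℝ (Fin (d+1)))⟫ ^ 4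
          - (2*((d:ℝ)+1)/(d:ℝ)^2) *
            ⟪(x i : EuclideanSpace ℝ (Fin (d+1))), (x j : EuclideanSpace ℝ (Fin (d+1)))⟫ ^ 2
          + 1/(d:ℝ)^2) := by
          refine Finset.sum_congr rfl fun i _ => Finset.sum_congr rfl fun j _ => ?_
          rw [hφ i j]
          ring
      _ = (((d:ℝ)+1)/d)^2 * (∑ i, ∑ j,
            ⟪(x i : EuclideanSpace ℝ (Fin (d+1))), (x j : EuclideanSpace ℝ (Fin (d+1)))⟫ ^ 4)
          - (2*((d:ℝ)+1)/(d:ℝ)^2) * (∑ i, ∑ j,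
            ⟪(x i : EuclideanSpace ℝ (Fin (d+1))), (x j : EuclideanSpace ℝ (Fin (d+1)))⟫ ^ 2)
          + (N:ℝ)^2 * (1/(d:ℝ)^2) := by
          simp only [Finset.sum_add_distrib, Finset.sum_sub_distrib, ← Finset.mul_sum,
            Finset.sum_const, Finset.card_univ, Fintype.card_fin, nsmul_eq_mul]
          ring
      _ = (N : ℝ) ^ 2 / D := by
          rw [hS2, hS4]
          have hDval : (D:ℝ) = (d:ℝ)*((d:ℝ)+3)/2 := by linarith
          rw [hDval]
          have h3 : ((d:ℝ)+3) ≠ 0 := by linarith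
          have h1 : ((d:ℝ)+1) ≠ 0 := by linarith
          field_simp
          ring
  have frame := frame_cond hD0 φ hT
  have hneginj : Function.Injective (fun i => -φ i) := by
    intro i j hij
    apply hφinj
    have hcc : ((-φ i : _) : EuclideanSpace ℝ (Fin D)) = ((-φ j : _) : EuclideanSpace ℝ (Fin D)) := by
      simp only at hij
      rw [hij]
    rw [coe_neg_sphere, coe_neg_sphere] at hcc
    exact Subtype.ext (neg_injective hcc)
  have hdisj : Disjoint (Finset.univ.image φ) (Finset.univ.image fun i => -φ i) := by
    rw [Finset.disjoint_left]
    rintro a ha hb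
    rw [Finset.mem_image] at ha hb
    obtain ⟨i, _, rfl⟩ := ha
    obtain ⟨j, _, hj⟩ := hb
    exact hφneg i j hj.symm
  have hcard : (Finset.univ.image φ ∪ Finset.univ.image fun i => -φ i).card = 2 * N := by
    rw [Finset.card_union_of_disjoint hdisj,
      Finset.card_image_of_injective _ hφinj, Finset.card_image_of_injective _ hneginj,
      Finset.card_univ, Fintype.card_fin]
    omega
  refine ⟨hcard, ?_⟩
  intro f hdeg
  haveI := isProbability_uniform hD0
  rw [hcard]
  have hev : ∀ v : EuclideanSpace ℝ (Fin D), MvPolynomial.eval v f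
      = ∑ α ∈ f.support, MvPolynomial.coeff α f * ∏ i, v i ^ α i := by
    intro v
    conv_lhs => rw [MvPolynomial.as_sum f]
    rw [map_sum]
    exact Finset.sum_congr rfl fun α _ => by rw [MvPolynomial.eval_monomial, Finsupp.prod_pow]
  have hcont : ∀ α : Fin D →₀ ℕ, Continuous (fun y : sphere (0 : EuclideanSpace ℝ (Fin D)) 1 =>
      ∏ i, (y : EuclideanSpace ℝ (Fin D)) i ^ α i) := fun α =>
    continuous_finset_prod _ fun i _ => (continuous_coord i).pow _
  have key : ∀ α ∈ f.support,
      (∑ y ∈ Finset.univ.image φ ∪ Finset.univ.image fun i => -φ i,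
        ∏ i, (y : EuclideanSpace ℝ (Fin D)) i ^ α i)
        = (2*(N:ℝ)) * ∫ y, (∏ i, (y : EuclideanSpace ℝ (Fin D)) i ^ α i)
            ∂(uniformSphereMeasure D) := by
    intro α hα
    have hsle : (∑ i, α i) ≤ 3 := by
      have ht1 := MvPolynomial.le_totalDegree hα
      have ht2 : (α.sum fun _ e => e) = ∑ i, α i := by rw [Finsupp.sum_fintype]; simp
      rw [ht2] at ht1
      omega
    have hsum_union : (∑ y ∈ Finset.univ.image φ ∪ Finset.univ.image fun i => -φ i,
          ∏ i, (y : EuclideanSpace ℝ (Fin D)) i ^ α i)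
        = (∑ i', ∏ i, ((φ i' : EuclideanSpace ℝ (Fin D)) i) ^ α i)
          + ∑ i', ∏ i, ((-(φ i' : EuclideanSpace ℝ (Fin D))) i) ^ α i := by
      rw [Finset.sum_union hdisj,
        Finset.sum_image (fun a _ b _ h => hφinj h),
        Finset.sum_image (fun a _ b _ h => hneginj h)]
      congr 1
    have hnegco : ∀ (v : EuclideanSpace ℝ (Fin D)) (i : Fin D),
        (-v : EuclideanSpace ℝ (Fin D)) i = -(v i) := fun v i => rfl
    have hnegprod : ∀ v : EuclideanSpace ℝ (Fin D),
        (∏ i, ((-v : EuclideanSpace ℝ (Fin D)) i) ^ α i)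
        = (-1:ℝ)^(∑ i, α i) * ∏ i, (v i) ^ α i := by
      intro v
      calc (∏ i, ((-v : EuclideanSpace ℝ (Fin D)) i) ^ α i)
          = ∏ i, (-(v i)) ^ α i := Finset.prod_congr rfl fun i _ => by rw [hnegco]
        _ = ∏ i, ((-1:ℝ)^(α i) * (v i) ^ α i) :=
            Finset.prod_congr rfl fun i _ => by rw [neg_pow]
        _ = (-1:ℝ)^(∑ i, α i) * ∏ i, (v i) ^ α i := by
            rw [Finset.prod_mul_distrib, Finset.prod_pow_eq_pow_sum]
    rcases Nat.even_or_odd (∑ i, α i) with hev2 | hodd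
    · have hcase : (∑ i, α i) = 0 ∨ (∑ i, α i) = 2 := by
        obtain ⟨t, ht⟩ := hev2
        omega
      rcases hcase with h0 | h2s
      · have hall := Finset.sum_eq_zero_iff.mp h0
        have hone : ∀ v : EuclideanSpace ℝ (Fin D), (∏ i, (v i) ^ α i) = 1 := fun v =>
          Finset.prod_eq_one fun i _ => by rw [hall i (Finset.mem_univ i), pow_zero]
        rw [hsum_union]
        simp only [hone]
        simp [integral_const]
        ring
      · obtain ⟨k, l, hkl⟩ := sum_eq_two_pair α h2s
        rw [hsum_union]
        rw [Finset.sum_congr rfl fun i' _ => hkl ((φ i' : EuclideanSpace ℝ (Fin D))),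
          Finset.sum_congr rfl fun i' _ => hkl (-(φ i' : EuclideanSpace ℝ (Fin D)))]
        have e2 : ∀ i', (-(φ i' : EuclideanSpace ℝ (Fin D))) k * (-(φ i' : EuclideanSpace ℝ (Fin D))) l
            = (φ i' : EuclideanSpace ℝ (Fin D)) k * (φ i' : EuclideanSpace ℝ (Fin D)) l := by
          intro i'
          rw [hnegco, hnegco]
          ring
        rw [Finset.sum_congr rfl fun i' _ => e2 i']
        rw [frame k l]
        have hint : (∫ y, (∏ i, (y : EuclideanSpace ℝ (Fin D)) i ^ α i)
            ∂(uniformSphereMeasure D))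
            = ∫ y, ((y : EuclideanSpace ℝ (Fin D)) k * (y : EuclideanSpace ℝ (Fin D)) l)
            ∂(uniformSphereMeasure D) := by
          congr 1
          funext y
          exact hkl _
        rw [hint, integral_coord_mul hD0 k l]
        rcases eq_or_ne k l with rfl | hne
        · simp only [if_pos rfl]
          field_simp
          ring
        · simp only [if_neg hne]
          ring
    · rw [hsum_union]
      rw [Finset.sum_congr rfl fun i' _ => hnegprod ((φ i' : EuclideanSpace ℝ (Fin D)))]
      rw [Odd.neg_one_pow hodd]
      have hIz := integral_odd_monomial (n := D) α hodd
      rw [hIz]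
      simp only [neg_one_mul, Finset.sum_neg_distrib]
      ring
  have hL : (∑ y ∈ Finset.univ.image φ ∪ Finset.univ.image fun i => -φ i,
        MvPolynomial.eval (y : EuclideanSpace ℝ (Fin D)) f)
      = (2*(N:ℝ)) * ∑ α ∈ f.support, MvPolynomial.coeff α f *
          ∫ y, (∏ i, (y : EuclideanSpace ℝ (Fin D)) i ^ α i) ∂(uniformSphereMeasure D) := by
    calc (∑ y ∈ Finset.univ.image φ ∪ Finset.univ.image fun i => -φ i,
          MvPolynomial.eval (y : EuclideanSpace ℝ (Fin D)) f)
        = ∑ y ∈ Finset.univ.image φ ∪ Finset.univ.image fun i => -φ i,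
            ∑ α ∈ f.support, MvPolynomial.coeff α f *
              ∏ i, (y : EuclideanSpace ℝ (Fin D)) i ^ α i :=
          Finset.sum_congr rfl fun y _ => hev _
      _ = ∑ α ∈ f.support, ∑ y ∈ Finset.univ.image φ ∪ Finset.univ.image fun i => -φ i,
            MvPolynomial.coeff α f * ∏ i, (y : EuclideanSpace ℝ (Fin D)) i ^ α i :=
          Finset.sum_comm
      _ = (2*(N:ℝ)) * ∑ α ∈ f.support, MvPolynomial.coeff α f *
            ∫ y, (∏ i, (y : EuclideanSpace ℝ (Fin D)) i ^ α i) ∂(uniformSphereMeasure D) := by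
          rw [Finset.mul_sum]
          refine Finset.sum_congr rfl fun α hα => ?_
          rw [← Finset.mul_sum, key α hα]
          ring
  have hR : (∫ y, MvPolynomial.eval (y : EuclideanSpace ℝ (Fin D)) f
        ∂(uniformSphereMeasure D))
      = ∑ α ∈ f.support, MvPolynomial.coeff α f *
          ∫ y, (∏ i, (y : EuclideanSpace ℝ (Fin D)) i ^ α i) ∂(uniformSphereMeasure D) := by
    have hfn : (fun y : sphere (0 : EuclideanSpace ℝ (Fin D)) 1 =>
        MvPolynomial.eval (y : EuclideanSpace ℝ (Fin D)) f)
        = fun y : sphere (0 : EuclideanSpace ℝ (Fin D)) 1 =>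
            ∑ α ∈ f.support, MvPolynomial.coeff α f *
              ∏ i, (y : EuclideanSpace ℝ (Fin D)) i ^ α i := funext fun y => hev _
    rw [hfn, integral_finset_sum _ (fun α _ =>
      (integrable_of_continuous hD0 _ (hcont α)).const_mul _)]
    exact Finset.sum_congr rfl fun α _ => integral_const_mul _ _
  rw [hL, hR]
  rw [Nat.cast_mul, Nat.cast_ofNat]
  rw [mul_div_cancel_left₀ _ (mul_ne_zero two_ne_zero hNr)]
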